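/- Let 0 < α < 1, λ ∈ ℝ, τ > 0, and (v^k)_{k≥0} a real sequence with v^{-1} = 0. Define the average A_t^α v^n = (1 - α/2) v^n + (α/2) v^{n-1}. Then for every n ≥ 1: (A_t^α v^n) · δ_t^{α,λ} v^n ≥ (1/2)[(α/2)e^{λτ} + (1 - α/2)] e^{-(α/2)λτ} δ_t^{α,2λ}(v^n)² + ((2 - α - e^{λτ})/4) τ^α e^{-(α/2)λτ} (δ_t^{α,λ} v^n)². -/

import Mathlib

noncomputable def binom (α : ℝ) (k : ℕ) : ℝ :=
  (∏ i ∈ Finset.range k, (α - i)) / (Nat.factorial k)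

noncomputable def g (α : ℝ) (k : ℕ) : ℝ := (-1) ^ k * binom α k

/-- `δ_t^{α,λ} v^n = τ^{-α} ∑_{k=0}^n e^{-(k-α/2)λτ} g_k^α v^{n-k}`. -/
noncomputable def delta (α lam τ : ℝ) (v : ℕ → ℝ) (n : ℕ) : ℝ :=
  τ ^ (-α) * ∑ k ∈ Finset.range (n + 1),
    Real.exp (-((k : ℝ) - α / 2) * lam * τ) * g α k * v (n - k)

/-- The average operator `𝒜_t^α v^n = (1 - α/2) v^n + (α/2) v^{n-1}`. -/
noncomputable def avg (α : ℝ) (v : ℕ → ℝ) (n : ℕ) : ℝ :=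
  (1 - α / 2) * v n + (α / 2) * v (n - 1)

/-! Substituting `a_k = e^{(α/2 - k)λτ} v^{n-k}` turns `δ_t^{α,λ} v^n` into `τ^{-α} ∑ g_k a_k`
and `δ_t^{α,2λ} (v^n)²` into `τ^{-α} ∑ g_k a_k²`, so everything reduces to two inequalities for
`S = ∑ g_k a_k` and `Q = ∑ g_k a_k²` (Lemma 4.1): `Q + S² ≤ 2 a₀ S` and `α Q - S² ≤ 2 α a₁ S`.
Both come from `g₀ = 1`, `g₁ = -α`, `g_k ≤ 0` for `k ≥ 1` and `∑_{k ≤ n} g_k ≥ 0`, through the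
Cauchy–Schwarz inequality applied to the nonpositive tail of the sums. The claim is the combination
`(1 - α/2)/2 · first + e^{λτ}/4 · second`, rescaled by `e^{-αλτ/2} τ^{-α}`. -/

open Finset Real

lemma g_eq_prod_div_factorial (α : ℝ) (k : ℕ) :
    g α k = (∏ i ∈ range k, ((i : ℝ) - α)) / k.factorial := by
  have hneg : ∏ i ∈ range k, ((i : ℝ) - α) = (-1) ^ k * ∏ i ∈ range k, (α - i) := by
    simpa using prod_neg (s := range k) (fun i : ℕ => α - i)
  rw [g, binom, hneg, mul_div_assoc]

lemma g_zero (α : ℝ) : g α 0 = 1 := by simp [g, binom]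

lemma g_one (α : ℝ) : g α 1 = -α := by simp [g, binom]

lemma g_succ_nonpos {α : ℝ} (hα0 : 0 ≤ α) (hα1 : α ≤ 1) (k : ℕ) : g α (k + 1) ≤ 0 := by
  rw [g_eq_prod_div_factorial, prod_range_succ']
  have htail : 0 ≤ ∏ i ∈ range k, (((i + 1 : ℕ) : ℝ) - α) :=
    prod_nonneg fun i _ => by push_cast; linarith [(i.cast_nonneg : (0 : ℝ) ≤ i)]
  exact div_nonpos_of_nonpos_of_nonneg
    (mul_nonpos_of_nonneg_of_nonpos htail (by simpa using hα0)) (by positivity)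

lemma sum_range_g (α : ℝ) (n : ℕ) :
    ∑ k ∈ range (n + 1), g α k = (∏ i ∈ range n, ((i : ℝ) + 1 - α)) / n.factorial := by
  induction n with
  | zero => simp [g_zero]
  | succ n ih =>
    have hg : g α (n + 1) = -α * (∏ i ∈ range n, ((i : ℝ) + 1 - α)) / (n + 1).factorial := by
      rw [g_eq_prod_div_factorial, prod_range_succ', mul_comm]
      push_cast
      simp only [zero_sub, add_sub_assoc]
    rw [sum_range_succ, ih, hg, prod_range_succ, Nat.factorial_succ]
    push_cast
    field_simp
    ring

lemma sum_range_g_nonneg {α : ℝ} (hα1 : α ≤ 1) (n : ℕ) : 0 ≤ ∑ k ∈ range (n + 1), g α k := by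
  rw [sum_range_g]
  exact div_nonneg (prod_nonneg fun i _ => by linarith [(i.cast_nonneg : (0 : ℝ) ≤ i)])
    (by positivity)

lemma sq_sum_mul_le_mul_sum_mul_sq {ι : Type*} {s : Finset ι} {w x : ι → ℝ} {C : ℝ}
    (hw : ∀ i ∈ s, 0 ≤ w i) (hC : ∑ i ∈ s, w i ≤ C) :
    (∑ i ∈ s, w i * x i) ^ 2 ≤ C * ∑ i ∈ s, w i * x i ^ 2 := by
  have hwx : ∀ i ∈ s, 0 ≤ w i * x i ^ 2 := fun i hi => mul_nonneg (hw i hi) (sq_nonneg (x i))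
  have hcs := sum_sq_le_sum_mul_sum_of_sq_le_mul s hw hwx
    fun i _ => (by ring : (w i * x i) ^ 2 = w i * (w i * x i ^ 2)).le
  exact hcs.trans (mul_le_mul_of_nonneg_right hC (sum_nonneg hwx))

lemma sum_g_mul_sq_add_sq_le {α : ℝ} (hα0 : 0 ≤ α) (hα1 : α ≤ 1) (n : ℕ) (a : ℕ → ℝ) :
    ∑ k ∈ range (n + 1), g α k * a k ^ 2 + (∑ k ∈ range (n + 1), g α k * a k) ^ 2 ≤
      2 * a 0 * ∑ k ∈ range (n + 1), g α k * a k := by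
  have hw : ∀ k ∈ range n, 0 ≤ -g α (k + 1) := fun k _ => neg_nonneg.2 (g_succ_nonpos hα0 hα1 k)
  have hwsum : ∑ k ∈ range n, -g α (k + 1) ≤ 1 := by
    have := sum_range_g_nonneg hα1 n
    rw [sum_range_succ', g_zero] at this
    rw [sum_neg_distrib]
    linarith
  have hcs := sq_sum_mul_le_mul_sum_mul_sq (x := fun k => a (k + 1)) hw hwsum
  simp only [sum_range_succ', g_zero, neg_mul, sum_neg_distrib] at hcs ⊢
  linear_combination hcs

lemma mul_sum_g_mul_sq_sub_sq_le {α : ℝ} (hα0 : 0 ≤ α) (hα1 : α < 1) {n : ℕ} (hn : 1 ≤ n)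
    (a : ℕ → ℝ) :
    α * ∑ k ∈ range (n + 1), g α k * a k ^ 2 - (∑ k ∈ range (n + 1), g α k * a k) ^ 2 ≤
      2 * α * a 1 * ∑ k ∈ range (n + 1), g α k * a k := by
  obtain ⟨m, rfl⟩ := Nat.exists_eq_add_of_le' hn
  have hw : ∀ k ∈ range m, 0 ≤ -g α (k + 2) :=
    fun k _ => neg_nonneg.2 (g_succ_nonpos hα0 hα1.le (k + 1))
  have hwsum : ∑ k ∈ range m, -g α (k + 2) ≤ 1 - α := by
    have := sum_range_g_nonneg hα1.le (m + 1)
    rw [sum_range_succ', sum_range_succ', g_zero, g_one] at this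
    rw [sum_neg_distrib]
    linarith
  have hcs := sq_sum_mul_le_mul_sum_mul_sq (x := fun k => a (k + 2)) hw hwsum
  have htail : 0 ≤ ∑ k ∈ range m, -g α (k + 2) * a (k + 2) ^ 2 :=
    sum_nonneg fun k hk => mul_nonneg (hw k hk) (sq_nonneg _)
  simp only [sum_range_succ', zero_add, g_zero, g_one, neg_mul, sum_neg_distrib] at hcs htail ⊢
  set X := ∑ k ∈ range m, g α (k + 1 + 1) * a (k + 1 + 1)
  set Y := ∑ k ∈ range m, g α (k + 1 + 1) * a (k + 1 + 1) ^ 2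
  -- `(1 - α)` times the defect is `((1 - α) a₀ + X)² + α ((1 - α) (-Y) - X²)`.
  have key : 0 ≤ (1 - α) * ((a 0 + X) ^ 2 - α * a 0 ^ 2 - α * Y) := by
    nlinarith [sq_nonneg ((1 - α) * a 0 + X), mul_nonneg hα0 (sub_nonneg.2 hcs)]
  linear_combination nonneg_of_mul_nonneg_right key (sub_pos.2 hα1)

lemma le_avg_weighted_mul_sum_g {α : ℝ} (hα0 : 0 ≤ α) (hα1 : α < 1) {n : ℕ} (hn : 1 ≤ n)
    (a : ℕ → ℝ) {E : ℝ} (hE : 0 ≤ E) :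
    (1 / 2) * ((α / 2) * E + (1 - α / 2)) * ∑ k ∈ range (n + 1), g α k * a k ^ 2 +
        ((2 - α - E) / 4) * (∑ k ∈ range (n + 1), g α k * a k) ^ 2 ≤
      ((1 - α / 2) * a 0 + (α / 2) * E * a 1) * ∑ k ∈ range (n + 1), g α k * a k := by
  have hA := mul_le_mul_of_nonneg_left (sum_g_mul_sq_add_sq_le hα0 hα1.le n a)
    (by linarith : 0 ≤ (1 - α / 2) / 2)
  have hB := mul_le_mul_of_nonneg_left (mul_sum_g_mul_sq_sub_sq_le hα0 hα1 hn a)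
    (by positivity : 0 ≤ E / 4)
  linear_combination hA + hB

noncomputable def tilt (α lam τ : ℝ) (v : ℕ → ℝ) (n k : ℕ) : ℝ :=
  exp ((α / 2 - k) * lam * τ) * v (n - k)

lemma delta_eq_sum_g_mul_tilt (α lam τ : ℝ) (v : ℕ → ℝ) (n : ℕ) :
    delta α lam τ v n = τ ^ (-α) * ∑ k ∈ range (n + 1), g α k * tilt α lam τ v n k := by
  unfold delta tilt
  congr 1
  refine sum_congr rfl fun k _ => ?_
  rw [show -((k : ℝ) - α / 2) * lam * τ = (α / 2 - k) * lam * τ by ring]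
  ring

lemma delta_two_mul_sq_eq_sum_g_mul_tilt_sq (α lam τ : ℝ) (v : ℕ → ℝ) (n : ℕ) :
    delta α (2 * lam) τ (fun k => v k ^ 2) n =
      τ ^ (-α) * ∑ k ∈ range (n + 1), g α k * tilt α lam τ v n k ^ 2 := by
  rw [delta_eq_sum_g_mul_tilt]
  congr 1
  refine sum_congr rfl fun k _ => ?_
  rw [tilt, tilt, mul_pow, ← exp_nat_mul]
  ring_nf

lemma exp_mul_tilt_zero (α lam τ : ℝ) (v : ℕ → ℝ) (n : ℕ) :
    exp (-(α / 2) * lam * τ) * tilt α lam τ v n 0 = v n := by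
  rw [tilt, ← mul_assoc, ← exp_add]
  ring_nf
  simp

lemma exp_mul_tilt_one (α lam τ : ℝ) (v : ℕ → ℝ) (n : ℕ) :
    exp (-(α / 2) * lam * τ) * exp (lam * τ) * tilt α lam τ v n 1 = v (n - 1) := by
  rw [tilt, ← mul_assoc, ← exp_add, ← exp_add]
  ring_nf
  simp

theorem stmt_14 (α lam τ : ℝ) (hα0 : 0 < α) (hα1 : α < 1) (hτ : 0 < τ)
    (v : ℕ → ℝ) (n : ℕ) (hn : 1 ≤ n) :
    avg α v n * delta α lam τ v n ≥
      (1 / 2) * ((α / 2) * Real.exp (lam * τ) + (1 - α / 2)) *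
          Real.exp (-(α / 2) * lam * τ) * delta α (2 * lam) τ (fun k => (v k) ^ 2) n +
        ((2 - α - Real.exp (lam * τ)) / 4) * τ ^ α * Real.exp (-(α / 2) * lam * τ) *
          (delta α lam τ v n) ^ 2 := by
  rw [ge_iff_le, avg, delta_two_mul_sq_eq_sum_g_mul_tilt_sq, delta_eq_sum_g_mul_tilt,
    ← exp_mul_tilt_zero α lam τ v n, ← exp_mul_tilt_one α lam τ v n]
  have hτα : τ ^ α * τ ^ (-α) = 1 := by rw [← rpow_add hτ, add_neg_cancel, rpow_zero]
  have key := mul_le_mul_of_nonneg_left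
    (le_avg_weighted_mul_sum_g hα0.le hα1 hn (tilt α lam τ v n) (exp_pos (lam * τ)).le)
    (by positivity : 0 ≤ exp (-(α / 2) * lam * τ) * τ ^ (-α))
  linear_combination key + (2 - α - exp (lam * τ)) / 4 * exp (-(α / 2) * lam * τ) * τ ^ (-α) *
    (∑ k ∈ range (n + 1), g α k * tilt α lam τ v n k) ^ 2 * hτα
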